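/- Let F be a filter in a distributive inverse semigroup S. Then F is an ultrafilter if and only if d(F) = (F⁻¹F)↑ is an ultrafilter. -/

import Mathlib

namespace InvPaper

/-- An inverse semigroup: a regular semigroup whose idempotents commute
(equivalently, each element has a unique generalized inverse `sinv`). -/
class InverseSemigroup (S : Type*) extends Semigroup S where
  sinv : S → S
  mul_sinv_mul : ∀ a : S, a * sinv a * a = a
  sinv_mul_sinv : ∀ a : S, sinv a * a * sinv a = sinv a
  idem_comm : ∀ e f : S, e * e = e → f * f = f → e * f = f * e

open InverseSemigroup

variable {S : Type*}

section Basic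
variable [InverseSemigroup S]

/-- `e` is an idempotent. -/
def idem (e : S) : Prop := e * e = e

/-- The natural partial order: `a ≤ b` iff `a = b * e` for some idempotent `e`. -/
def nle (a b : S) : Prop := ∃ e : S, idem e ∧ a = b * e

/-- `s` and `t` are compatible: `s⁻¹t` and `st⁻¹` are idempotents. -/
def compatible (s t : S) : Prop := idem (sinv s * t) ∧ idem (s * sinv t)

/-- `j` is the join (least upper bound) of `a` and `b` w.r.t. the natural partial order. -/
def isJoin (a b j : S) : Prop :=
  nle a j ∧ nle b j ∧ ∀ c : S, nle a c → nle b c → nle j c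

/-- `m` is the meet (greatest lower bound) of `a` and `b`. -/
def isMeet (a b m : S) : Prop :=
  nle m a ∧ nle m b ∧ ∀ z : S, nle z a → nle z b → nle z m

/-- `j` is the least upper bound of the set `A`. -/
def isJoinSet (A : Set S) (j : S) : Prop :=
  (∀ a ∈ A, nle a j) ∧ ∀ c : S, (∀ a ∈ A, nle a c) → nle j c

/-- A filter: a nonempty, downward-directed, upward-closed subset. -/
def IsFilter (F : Set S) : Prop :=
  F.Nonempty ∧ (∀ a ∈ F, ∀ b ∈ F, ∃ c ∈ F, nle c a ∧ nle c b) ∧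
    ∀ a ∈ F, ∀ b : S, nle a b → b ∈ F

/-- An order ideal: a downward-closed subset. -/
def IsOrderIdeal (A : Set S) : Prop := ∀ x ∈ A, ∀ y : S, nle y x → y ∈ A

end Basic

/-- An inverse semigroup with a (multiplicative) zero element. -/
class InverseSemigroupWithZero (S : Type*) extends InverseSemigroup S, Zero S where
  zmul : ∀ a : S, 0 * a = 0
  mulz : ∀ a : S, a * 0 = 0

section WithZero
variable [InverseSemigroupWithZero S]

/-- A proper filter: a filter not containing `0`. -/
def IsProperFilter (F : Set S) : Prop := IsFilter F ∧ (0 : S) ∉ F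

/-- An ultrafilter: a maximal proper filter. -/
def IsUltrafilter (F : Set S) : Prop :=
  IsProperFilter F ∧ ∀ G : Set S, IsProperFilter G → F ⊆ G → G = F

/-- A prime filter: a proper filter `F` such that whenever a join `a ∨ b` exists and
lies in `F`, then `a ∈ F` or `b ∈ F`. -/
def IsPrimeFilter (F : Set S) : Prop :=
  IsProperFilter F ∧ ∀ a b j : S, isJoin a b j → j ∈ F → a ∈ F ∨ b ∈ F

/-- `d(F) = (F⁻¹F)↑`, the upward closure of `{a⁻¹b : a, b ∈ F}`. -/
def dClosure (F : Set S) : Set S :=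
  {x | ∃ a ∈ F, ∃ b ∈ F, nle (InverseSemigroup.sinv a * b) x}

/-- `r(F) = (FF⁻¹)↑`, the upward closure of `{ab⁻¹ : a, b ∈ F}`. -/
def rClosure (F : Set S) : Set S :=
  {x | ∃ a ∈ F, ∃ b ∈ F, nle (a * InverseSemigroup.sinv b) x}

/-- The product of two filters: `F · G = (FG)↑`. -/
def filterMul (F G : Set S) : Set S :=
  {x | ∃ a ∈ F, ∃ b ∈ G, nle (a * b) x}

/-- `A` is ∨-closed: closed under existing joins of finite nonempty compatible subsets. -/
def IsVeeClosed (A : Set S) : Prop :=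
  ∀ Y : Finset S, Y.Nonempty → ↑Y ⊆ A → (∀ a ∈ Y, ∀ b ∈ Y, compatible a b) →
    ∀ j : S, isJoinSet (↑Y : Set S) j → j ∈ A

/-- The ∨-closure `A^∨`: all existing joins of finite nonempty compatible subsets of `A`. -/
def veeClosure (A : Set S) : Set S :=
  {x | ∃ Y : Finset S, Y.Nonempty ∧ ↑Y ⊆ A ∧ (∀ a ∈ Y, ∀ b ∈ Y, compatible a b) ∧
    isJoinSet (↑Y : Set S) x}

/-- A prime order ideal: if every common lower bound of `a` and `b` lies in `P`,
then `a ∈ P` or `b ∈ P`. -/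
def IsPrimeOrderIdeal (P : Set S) : Prop :=
  ∀ a b : S, (∀ z : S, nle z a → nle z b → z ∈ P) → a ∈ P ∨ b ∈ P

/-- The set of prime filters containing `s`. -/
def Xset (s : S) : Set (Set S) := {F | IsPrimeFilter F ∧ s ∈ F}

end WithZero

/-- A distributive inverse semigroup: compatible pairs have joins and
multiplication distributes over these joins. -/
class DistributiveInverseSemigroup (S : Type*) extends InverseSemigroupWithZero S where
  joins_exist : ∀ a b : S, compatible a b → ∃ j : S, isJoin a b j
  mul_distrib_left : ∀ a b j c : S, compatible a b → isJoin a b j →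
    isJoin (c * a) (c * b) (c * j)
  mul_distrib_right : ∀ a b j c : S, compatible a b → isJoin a b j →
    isJoin (a * c) (b * c) (j * c)

/-- A distributive inverse semigroup is Boolean if its idempotents form a generalized
Boolean algebra: relative complements of idempotents exist. -/
def IsBoolean (S : Type*) [DistributiveInverseSemigroup S] : Prop :=
  ∀ e f : S, idem e → idem f → nle e f →
    ∃ g : S, idem g ∧ e * g = 0 ∧ isJoin e g f

/-- A pseudogroup: an inverse semigroup with joins of all nonempty compatible subsets,
over which multiplication distributes. -/
class Pseudogroup (S : Type*) extends InverseSemigroup S where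
  joins_exist : ∀ A : Set S, A.Nonempty → (∀ a ∈ A, ∀ b ∈ A, compatible a b) →
    ∃ j : S, isJoinSet A j
  mul_distrib_left : ∀ (A : Set S) (j c : S), isJoinSet A j →
    isJoinSet ((c * ·) '' A) (c * j)
  mul_distrib_right : ∀ (A : Set S) (j c : S), isJoinSet A j →
    isJoinSet ((· * c) '' A) (j * c)

/-!
For a filter `F` and any `a ∈ F`, every `c ≤ a` is recovered as `c = a · c⁻¹c`, so `F` is
determined by `a` and `d(F)`. Hence comparable filters `F ⊆ G` with `d(F) = d(G)` coincide,
which transfers maximality from `d(F)` to `F`. Conversely, a proper filter `H ⊇ d(F)` gives the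
proper filter `(FH)↑ ⊇ F`; if `F` is maximal then `(FH)↑ = F`, and `a⁻¹(ah) ≤ h` puts `H`
inside `d(F)`.
-/

section Order
variable [InverseSemigroup S]

lemma idem_mul_of_mul_mul_eq_left {a u : S} (h : a * u * a = a) : idem (u * a) :=
  calc u * a * (u * a) = u * (a * u * a) := by simp only [mul_assoc]
    _ = u * a := by rw [h]

lemma idem_mul_of_mul_mul_eq_right {a u : S} (h : a * u * a = a) : idem (a * u) :=
  calc a * u * (a * u) = a * u * a * u := by simp only [mul_assoc]
    _ = a * u := by rw [h]

lemma idem_sinv_mul_self (a : S) : idem (sinv a * a) :=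
  idem_mul_of_mul_mul_eq_left (mul_sinv_mul a)

lemma idem_mul_sinv_self (a : S) : idem (a * sinv a) :=
  idem_mul_of_mul_mul_eq_right (mul_sinv_mul a)

lemma idem.mul {e f : S} (he : idem e) (hf : idem f) : idem (e * f) :=
  calc e * f * (e * f) = e * (f * e) * f := by simp only [mul_assoc]
    _ = e * (e * f) * f := by rw [idem_comm f e hf he]
    _ = e * e * (f * f) := by simp only [mul_assoc]
    _ = e * f := by rw [he, hf]

lemma idem.conj {e : S} (he : idem e) {u v : S} (huv : u * v * u = u) (hvu : v * u * v = v) :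
    idem (u * e * v) :=
  calc u * e * v * (u * e * v) = u * (e * (v * u)) * e * v := by simp only [mul_assoc]
    _ = u * (v * u * e) * e * v := by
        rw [idem_comm e (v * u) he (idem_mul_of_mul_mul_eq_right hvu)]
    _ = u * v * u * (e * e) * v := by simp only [mul_assoc]
    _ = u * e * v := by rw [huv, he]

lemma nle.refl (a : S) : nle a a :=
  ⟨sinv a * a, idem_sinv_mul_self a, by rw [← mul_assoc, mul_sinv_mul]⟩

lemma nle.trans {a b c : S} (hab : nle a b) (hbc : nle b c) : nle a c := by
  obtain ⟨e, he, rfl⟩ := hab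
  obtain ⟨f, hf, rfl⟩ := hbc
  exact ⟨f * e, hf.mul he, mul_assoc c f e⟩

lemma nle_iff_exists_idem_mul {a b : S} : nle a b ↔ ∃ f : S, idem f ∧ a = f * b := by
  constructor
  · rintro ⟨e, he, rfl⟩
    refine ⟨b * e * sinv b, he.conj (mul_sinv_mul b) (sinv_mul_sinv b), ?_⟩
    calc b * e = b * sinv b * b * e := by rw [mul_sinv_mul]
      _ = b * (sinv b * b * e) := by simp only [mul_assoc]
      _ = b * (e * (sinv b * b)) := by rw [idem_comm _ e (idem_sinv_mul_self b) he]
      _ = b * e * sinv b * b := by simp only [mul_assoc]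
  · rintro ⟨f, hf, rfl⟩
    refine ⟨sinv b * f * b, hf.conj (sinv_mul_sinv b) (mul_sinv_mul b), ?_⟩
    calc f * b = f * (b * sinv b) * b := by simp only [mul_assoc]; rw [← mul_assoc b, mul_sinv_mul]
      _ = b * sinv b * f * b := by rw [idem_comm f _ hf (idem_mul_sinv_self b)]
      _ = b * (sinv b * f * b) := by simp only [mul_assoc]

lemma nle_idem_mul {e : S} (he : idem e) (a : S) : nle (e * a) a :=
  nle_iff_exists_idem_mul.mpr ⟨e, he, rfl⟩

lemma nle.mul_left {a b : S} (h : nle a b) (c : S) : nle (c * a) (c * b) := by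
  obtain ⟨e, he, rfl⟩ := h
  exact ⟨e, he, (mul_assoc c b e).symm⟩

lemma nle.mul_right {a b : S} (h : nle a b) (c : S) : nle (a * c) (b * c) := by
  obtain ⟨f, hf, rfl⟩ := nle_iff_exists_idem_mul.mp h
  exact nle_iff_exists_idem_mul.mpr ⟨f, hf, mul_assoc f b c⟩

lemma nle.mul {a b c d : S} (hab : nle a b) (hcd : nle c d) : nle (a * c) (b * d) :=
  (hab.mul_right c).trans (hcd.mul_left b)

-- Both `u` and `sinv a` equal `sinv a * a * u`.
lemma sinv_eq_of_mul_mul_eq {a u : S} (h₁ : a * u * a = a) (h₂ : u * a * u = u) :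
    sinv a = u := by
  set v := sinv a
  have hv₁ : a * v * a = a := mul_sinv_mul a
  have hv₂ : v * a * v = v := sinv_mul_sinv a
  have hu : u = v * a * u :=
    calc u = u * (a * v * a) * u := by rw [hv₁, h₂]
      _ = u * a * (v * a) * u := by simp only [mul_assoc]
      _ = v * a * (u * a) * u := by
          rw [idem_comm _ _ (idem_mul_of_mul_mul_eq_left h₁) (idem_mul_of_mul_mul_eq_left hv₁)]
      _ = v * a * (u * a * u) := by simp only [mul_assoc]
      _ = v * a * u := by rw [h₂]
  have hv : v = v * a * u :=
    calc v = v * (a * u * a) * v := by rw [h₁, hv₂]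
      _ = v * ((a * u) * (a * v)) := by simp only [mul_assoc]
      _ = v * ((a * v) * (a * u)) := by
          rw [idem_comm _ _ (idem_mul_of_mul_mul_eq_right h₁) (idem_mul_of_mul_mul_eq_right hv₁)]
      _ = v * a * v * a * u := by simp only [mul_assoc]
      _ = v * a * u := by rw [hv₂]
  exact hv.trans hu.symm

lemma sinv_of_idem {e : S} (he : idem e) : sinv e = e :=
  sinv_eq_of_mul_mul_eq (by rw [he, he]) (by rw [he, he])

lemma sinv_mul (a b : S) : sinv (a * b) = sinv b * sinv a := by
  have hcomm := idem_comm _ _ (idem_mul_sinv_self b) (idem_sinv_mul_self a)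
  refine sinv_eq_of_mul_mul_eq ?_ ?_
  · calc a * b * (sinv b * sinv a) * (a * b) = a * (b * sinv b * (sinv a * a)) * b := by
          simp only [mul_assoc]
      _ = a * sinv a * a * (b * sinv b * b) := by rw [hcomm]; simp only [mul_assoc]
      _ = a * b := by rw [mul_sinv_mul, mul_sinv_mul]
  · calc sinv b * sinv a * (a * b) * (sinv b * sinv a)
          = sinv b * (sinv a * a * (b * sinv b)) * sinv a := by simp only [mul_assoc]
      _ = sinv b * b * sinv b * (sinv a * a * sinv a) := by rw [← hcomm]; simp only [mul_assoc]
      _ = sinv b * sinv a := by rw [sinv_mul_sinv, sinv_mul_sinv]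

lemma nle.sinv {a b : S} (h : nle a b) : nle (sinv a) (sinv b) := by
  obtain ⟨e, he, rfl⟩ := h
  exact nle_iff_exists_idem_mul.mpr ⟨e, he, by rw [sinv_mul, sinv_of_idem he]⟩

lemma sinv_mul_self_nle_sinv_mul {s a b : S} (ha : nle s a) (hb : nle s b) :
    nle (sinv s * s) (sinv a * b) :=
  ha.sinv.mul hb

lemma mul_sinv_mul_self_of_nle {a c : S} (h : nle c a) : a * (sinv c * c) = c := by
  obtain ⟨e, he, rfl⟩ := h
  calc a * (sinv (a * e) * (a * e)) = a * (e * (sinv a * a)) * e := by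
        rw [sinv_mul, sinv_of_idem he]; simp only [mul_assoc]
    _ = a * sinv a * a * (e * e) := by
        rw [idem_comm e _ he (idem_sinv_mul_self a)]; simp only [mul_assoc]
    _ = a * e := by rw [mul_sinv_mul, he]

end Order

section Filters
variable [InverseSemigroupWithZero S]

lemma eq_zero_of_nle_zero {x : S} (h : nle x 0) : x = 0 := by
  obtain ⟨e, -, rfl⟩ := h
  exact InverseSemigroupWithZero.zmul e

lemma IsFilter.zero_mem_of_idem_mul_eq_zero {H : Set S} (hH : IsFilter H) {e h : S}
    (he : idem e) (heH : e ∈ H) (hhH : h ∈ H) (h0 : e * h = 0) : (0 : S) ∈ H := by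
  obtain ⟨_, hk, ⟨f, -, rfl⟩, g, -, hkg⟩ := hH.2.1 e heH h hhH
  have hk0 : e * f = 0 :=
    calc e * f = e * (e * f) := by rw [← mul_assoc, he]
      _ = e * h * g := by rw [hkg, mul_assoc]
      _ = 0 := by rw [h0, InverseSemigroupWithZero.zmul]
  exact hk0 ▸ hk

lemma sinv_mul_self_mem_dClosure {F : Set S} {a : S} (ha : a ∈ F) : sinv a * a ∈ dClosure F :=
  ⟨a, ha, a, ha, nle.refl _⟩

lemma dClosure_mono {F G : Set S} (h : F ⊆ G) : dClosure F ⊆ dClosure G := by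
  rintro x ⟨a, ha, b, hb, hab⟩
  exact ⟨a, h ha, b, h hb, hab⟩

lemma IsFilter.exists_sinv_mul_self_nle {F : Set S} (hF : IsFilter F) {x : S}
    (hx : x ∈ dClosure F) : ∃ r ∈ F, nle (sinv r * r) x := by
  obtain ⟨a, ha, b, hb, hab⟩ := hx
  obtain ⟨r, hr, hra, hrb⟩ := hF.2.1 a ha b hb
  exact ⟨r, hr, (sinv_mul_self_nle_sinv_mul hra hrb).trans hab⟩

lemma IsFilter.dClosure {F : Set S} (hF : IsFilter F) : IsFilter (dClosure F) := by
  obtain ⟨a, ha⟩ := hF.1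
  refine ⟨⟨_, sinv_mul_self_mem_dClosure ha⟩, fun x hx y hy => ?_, ?_⟩
  · obtain ⟨r, hr, hrx⟩ := hF.exists_sinv_mul_self_nle hx
    obtain ⟨s, hs, hsy⟩ := hF.exists_sinv_mul_self_nle hy
    obtain ⟨t, ht, htr, hts⟩ := hF.2.1 r hr s hs
    exact ⟨_, sinv_mul_self_mem_dClosure ht, (sinv_mul_self_nle_sinv_mul htr htr).trans hrx,
      (sinv_mul_self_nle_sinv_mul hts hts).trans hsy⟩
  · rintro x ⟨p, hp, q, hq, hpq⟩ y hxy
    exact ⟨p, hp, q, hq, hpq.trans hxy⟩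

lemma IsProperFilter.dClosure {F : Set S} (hF : IsProperFilter F) :
    IsProperFilter (dClosure F) := by
  refine ⟨hF.1.dClosure, fun h0 => hF.2 ?_⟩
  obtain ⟨r, hr, hr0⟩ := hF.1.exists_sinv_mul_self_nle h0
  have : r = 0 := by
    rw [← mul_sinv_mul r, mul_assoc, eq_zero_of_nle_zero hr0, InverseSemigroupWithZero.mulz]
  exact this ▸ hr

lemma IsFilter.filterMul {F H : Set S} (hF : IsFilter F) (hH : IsFilter H) :
    IsFilter (filterMul F H) := by
  obtain ⟨a, ha⟩ := hF.1
  obtain ⟨h, hh⟩ := hH.1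
  refine ⟨⟨a * h, a, ha, h, hh, nle.refl _⟩, ?_, ?_⟩
  · rintro x ⟨a₁, ha₁, h₁, hh₁, hx⟩ y ⟨a₂, ha₂, h₂, hh₂, hy⟩
    obtain ⟨a, ha, haa₁, haa₂⟩ := hF.2.1 a₁ ha₁ a₂ ha₂
    obtain ⟨h, hh, hhh₁, hhh₂⟩ := hH.2.1 h₁ hh₁ h₂ hh₂
    exact ⟨a * h, ⟨a, ha, h, hh, nle.refl _⟩, (haa₁.mul hhh₁).trans hx,
      (haa₂.mul hhh₂).trans hy⟩
  · rintro x ⟨a, ha, h, hh, hx⟩ y hxy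
    exact ⟨a, ha, h, hh, hx.trans hxy⟩

lemma subset_filterMul_of_dClosure_subset {F H : Set S} (hFH : dClosure F ⊆ H) :
    F ⊆ filterMul F H := fun a ha =>
  ⟨a, ha, sinv a * a, hFH (sinv_mul_self_mem_dClosure ha), by
    rw [← mul_assoc, mul_sinv_mul]; exact nle.refl a⟩

lemma zero_not_mem_filterMul {F H : Set S} (hH : IsProperFilter H) (hFH : dClosure F ⊆ H) :
    (0 : S) ∉ filterMul F H := by
  rintro ⟨a, ha, h, hh, h0⟩
  refine hH.2 (hH.1.zero_mem_of_idem_mul_eq_zero (idem_sinv_mul_self a)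
    (hFH (sinv_mul_self_mem_dClosure ha)) hh ?_)
  rw [mul_assoc, eq_zero_of_nle_zero h0, InverseSemigroupWithZero.mulz]

lemma subset_dClosure_of_filterMul_subset {F H : Set S} (hF : F.Nonempty)
    (hFH : filterMul F H ⊆ F) : H ⊆ dClosure F := by
  obtain ⟨a, ha⟩ := hF
  intro h hh
  refine ⟨a, ha, a * h, hFH ⟨a, ha, h, hh, nle.refl _⟩, ?_⟩
  rw [← mul_assoc]
  exact nle_idem_mul (idem_sinv_mul_self a) h

lemma subset_of_dClosure_subset {F G : Set S} (hF : IsFilter F) (hG : IsFilter G)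
    (hFG : F ⊆ G) (hd : dClosure G ⊆ dClosure F) : G ⊆ F := by
  intro g hg
  obtain ⟨a, ha⟩ := hF.1
  obtain ⟨c, hc, hcg, hca⟩ := hG.2.1 g hg a (hFG ha)
  obtain ⟨r, hr, hrc⟩ := hF.exists_sinv_mul_self_nle (hd (sinv_mul_self_mem_dClosure hc))
  obtain ⟨s, hs, hsr, hsa⟩ := hF.2.1 r hr a ha
  -- `s = a s⁻¹s ≤ a c⁻¹c = c`
  have hsc : nle s c := by
    rw [← mul_sinv_mul_self_of_nle hsa, ← mul_sinv_mul_self_of_nle hca]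
    exact ((sinv_mul_self_nle_sinv_mul hsr hsr).trans hrc).mul_left a
  exact hF.2.2 s hs g (hsc.trans hcg)

end Filters

/-- A filter `F` in a distributive inverse semigroup is an ultrafilter
iff `d(F) = (F⁻¹F)↑` is an ultrafilter. -/
theorem stmt6 {S : Type*} [DistributiveInverseSemigroup S] (F : Set S)
    (hF : IsFilter F) (hproper : (0 : S) ∉ F) :
    IsUltrafilter F ↔ IsUltrafilter (dClosure F) := by
  constructor
  · intro hU
    refine ⟨IsProperFilter.dClosure ⟨hF, hproper⟩, fun H hH hFH => ?_⟩
    have hmul : filterMul F H = F :=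
      hU.2 _ ⟨hF.filterMul hH.1, zero_not_mem_filterMul hH hFH⟩
        (subset_filterMul_of_dClosure_subset hFH)
    exact (subset_dClosure_of_filterMul_subset hF.1 hmul.subset).antisymm hFH
  · intro hdU
    refine ⟨⟨hF, hproper⟩, fun G hG hFG => ?_⟩
    have hd : dClosure G = dClosure F := hdU.2 _ hG.dClosure (dClosure_mono hFG)
    exact (subset_of_dClosure_subset hF hG.1 hFG hd.subset).antisymm hFG

end InvPaper
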